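/- arXiv:1707.09129 — 5 statements merged into one kernel-verified Lean document; each statement's English description precedes it below -/
import Mathlib

section
/- For all integers p, q, r, t, k, define x1 = ((p^4-r^4)*t^2 - 2*(p^4-q^4)*t + p^4-q^4)*p^2*k, x2 = ((p^4-r^4)*t^2 - 2*(p^4-r^4)*t + p^4-q^4)*q^2*k, x3 = ((p^4-r^4)*t^2 - (p^4-q^4))*r^2*k, y1 = ((p^4-r^4)*t^2 - 2*(p^4-r^4)*t + p^4-q^4)*p^2*k, y2 = ((p^4-r^4)*t^2 - (p^4-q^4))*q^2*k, y3 = ((p^4-r^4)*t^2 - 2*(p^4-q^4)*t + p^4-q^4)*r^2*k. Then x1^2 + x2^2 + x3^2 = y1^2 + y2^2 + y3^2 and x1*x2*x3 = y1*y2*y3. -/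
theorem stmt_2 (p q r t k : ℤ)
    (x1 x2 x3 y1 y2 y3 : ℤ)
    (hx1 : x1 = ((p^4-r^4)*t^2 - 2*(p^4-q^4)*t + p^4-q^4)*p^2*k)
    (hx2 : x2 = ((p^4-r^4)*t^2 - 2*(p^4-r^4)*t + p^4-q^4)*q^2*k)
    (hx3 : x3 = ((p^4-r^4)*t^2 - (p^4-q^4))*r^2*k)
    (hy1 : y1 = ((p^4-r^4)*t^2 - 2*(p^4-r^4)*t + p^4-q^4)*p^2*k)
    (hy2 : y2 = ((p^4-r^4)*t^2 - (p^4-q^4))*q^2*k)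
    (hy3 : y3 = ((p^4-r^4)*t^2 - 2*(p^4-q^4)*t + p^4-q^4)*r^2*k) :
    x1^2 + x2^2 + x3^2 = y1^2 + y2^2 + y3^2 ∧ x1*x2*x3 = y1*y2*y3 := by
  subst hx1 hx2 hx3 hy1 hy2 hy3
  constructor <;> ring
end

section
/- For all integers a and b, define x1 = (2a-b)^2*(a^2-ab+b^2)^2*(5a^3-7a^2b+4ab^2-b^3)^2, x2 = (a^3-3a^2b+2ab^2-b^3)^2*(5a^3-8a^2b+5ab^2-b^3)^2, x3 = (a^3-ab^2+b^3)^2*(3a^2-3ab+b^2)^2*b^2, y1 = (2a-b)^2*(a^2-ab+b^2)^2*(5a^3-8a^2b+5ab^2-b^3)^2, y2 = (a^3-3a^2b+2ab^2-b^3)^2*(3a^2-3ab+b^2)^2*b^2, y3 = (a^3-ab^2+b^3)^2*(5a^3-7a^2b+4ab^2-b^3)^2. Then x1^2 + x2^2 + x3^2 = y1^2 + y2^2 + y3^2. -/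
theorem stmt_10 (a b : ℤ) (x1 x2 x3 y1 y2 y3 : ℤ)
    (hx1 : x1 = (2*a-b)^2*(a^2-a*b+b^2)^2*(5*a^3-7*a^2*b+4*a*b^2-b^3)^2)
    (hx2 : x2 = (a^3-3*a^2*b+2*a*b^2-b^3)^2*(5*a^3-8*a^2*b+5*a*b^2-b^3)^2)
    (hx3 : x3 = (a^3-a*b^2+b^3)^2*(3*a^2-3*a*b+b^2)^2*b^2)
    (hy1 : y1 = (2*a-b)^2*(a^2-a*b+b^2)^2*(5*a^3-8*a^2*b+5*a*b^2-b^3)^2)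
    (hy2 : y2 = (a^3-3*a^2*b+2*a*b^2-b^3)^2*(3*a^2-3*a*b+b^2)^2*b^2)
    (hy3 : y3 = (a^3-a*b^2+b^3)^2*(5*a^3-7*a^2*b+4*a*b^2-b^3)^2) :
    x1^2 + x2^2 + x3^2 = y1^2 + y2^2 + y3^2 := by subst hx1 hx2 hx3 hy1 hy2 hy3; ring
end

section
/- For all integers a and b, each of the six quantities x1 = (2a-b)^2*(a^2-ab+b^2)^2*(5a^3-7a^2b+4ab^2-b^3)^2, x2 = (a^3-3a^2b+2ab^2-b^3)^2*(5a^3-8a^2b+5ab^2-b^3)^2, x3 = (a^3-ab^2+b^3)^2*(3a^2-3ab+b^2)^2*b^2, y1 = (2a-b)^2*(a^2-ab+b^2)^2*(5a^3-8a^2b+5ab^2-b^3)^2, y2 = (a^3-3a^2b+2ab^2-b^3)^2*(3a^2-3ab+b^2)^2*b^2, y3 = (a^3-ab^2+b^3)^2*(5a^3-7a^2b+4ab^2-b^3)^2 is a perfect square, and moreover x1^4's analog holds: x1^2 + x2^2 + x3^2 = y1^2 + y2^2 + y3^2 and x1*x2*x3 = y1*y2*y3; hence there exist integers u1,u2,u3,v1,v2,v3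 with u1^4+u2^4+u3^4 = v1^4+v2^4+v3^4 and u1^4*u2^4*u3^4 = v1^4*v2^4*v3^4 where ui^2 = xi and vi^2 = yi. -/
theorem stmt_12 (a b : ℤ) (x1 x2 x3 y1 y2 y3 : ℤ)
    (hx1 : x1 = (2*a-b)^2*(a^2-a*b+b^2)^2*(5*a^3-7*a^2*b+4*a*b^2-b^3)^2)
    (hx2 : x2 = (a^3-3*a^2*b+2*a*b^2-b^3)^2*(5*a^3-8*a^2*b+5*a*b^2-b^3)^2)
    (hx3 : x3 = (a^3-a*b^2+b^3)^2*(3*a^2-3*a*b+b^2)^2*b^2)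
    (hy1 : y1 = (2*a-b)^2*(a^2-a*b+b^2)^2*(5*a^3-8*a^2*b+5*a*b^2-b^3)^2)
    (hy2 : y2 = (a^3-3*a^2*b+2*a*b^2-b^3)^2*(3*a^2-3*a*b+b^2)^2*b^2)
    (hy3 : y3 = (a^3-a*b^2+b^3)^2*(5*a^3-7*a^2*b+4*a*b^2-b^3)^2) :
    (IsSquare x1 ∧ IsSquare x2 ∧ IsSquare x3 ∧ IsSquare y1 ∧ IsSquare y2 ∧ IsSquare y3) ∧
    x1^2 + x2^2 + x3^2 = y1^2 + y2^2 + y3^2 ∧ x1*x2*x3 = y1*y2*y3 ∧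
    ∃ u1 u2 u3 v1 v2 v3 : ℤ,
      u1^2 = x1 ∧ u2^2 = x2 ∧ u3^2 = x3 ∧ v1^2 = y1 ∧ v2^2 = y2 ∧ v3^2 = y3 ∧
      u1^4 + u2^4 + u3^4 = v1^4 + v2^4 + v3^4 ∧
      u1^4 * u2^4 * u3^4 = v1^4 * v2^4 * v3^4 := by
  subst hx1 hx2 hx3 hy1 hy2 hy3
  refine ⟨⟨⟨(2*a-b)*(a^2-a*b+b^2)*(5*a^3-7*a^2*b+4*a*b^2-b^3), by ring⟩,
    ⟨(a^3-3*a^2*b+2*a*b^2-b^3)*(5*a^3-8*a^2*b+5*a*b^2-b^3), by ring⟩,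
    ⟨(a^3-a*b^2+b^3)*(3*a^2-3*a*b+b^2)*b, by ring⟩,
    ⟨(2*a-b)*(a^2-a*b+b^2)*(5*a^3-8*a^2*b+5*a*b^2-b^3), by ring⟩,
    ⟨(a^3-3*a^2*b+2*a*b^2-b^3)*(3*a^2-3*a*b+b^2)*b, by ring⟩,
    ⟨(a^3-a*b^2+b^3)*(5*a^3-7*a^2*b+4*a*b^2-b^3), by ring⟩⟩,
    by ring, by ring,
    (2*a-b)*(a^2-a*b+b^2)*(5*a^3-7*a^2*b+4*a*b^2-b^3),
    (a^3-3*a^2*b+2*a*b^2-b^3)*(5*a^3-8*a^2*b+5*a*b^2-b^3),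
    (a^3-a*b^2+b^3)*(3*a^2-3*a*b+b^2)*b,
    (2*a-b)*(a^2-a*b+b^2)*(5*a^3-8*a^2*b+5*a*b^2-b^3),
    (a^3-3*a^2*b+2*a*b^2-b^3)*(3*a^2-3*a*b+b^2)*b,
    (a^3-a*b^2+b^3)*(5*a^3-7*a^2*b+4*a*b^2-b^3),
    by ring, by ring, by ring, by ring, by ring, by ring, by ring, by ring⟩
end

section
/- For all rationals a, b with a ≠ 0, a ≠ b, and 5a^2-5ab+2b^2 ≠ 0, setting p = 2a^3-3a^2b+3ab^2-b^3, q = -a^3+3a^2b-2ab^2+b^3, r = a^3-ab^2+b^3, the two rational expressions (p^2+q^2)*(p^4+2p^3q-2p^2r^2-2pq^3-4pqr^2+q^4+2q^2r^2+2r^4)/((p^2-r^2)*(p^4+2p^3q-2p^2r^2+2pq^3+q^4-2q^2r^2-2r^4)) and (p^2+q^2)*(p^4-2p^3r-2p^2q^2+4pq^2r+2pr^3+2q^4+2q^2r^2+r^4)/((p^2-r^2)*(p^4-2p^3r-2p^2q^2-2pr^3-2q^4-2q^2r^2+r^4)) are both equal to -(5a^4-8a^3b+8a^2b^2-4ab^3+b^4)/(a*(a-b)*(5a^2-5ab+2b^2)),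 provided the respective denominators are nonzero. -/
theorem stmt_15 (a b : ℚ) (ha : a ≠ 0) (hab : a ≠ b)
    (h5 : 5*a^2-5*a*b+2*b^2 ≠ 0) :
    let p := 2*a^3-3*a^2*b+3*a*b^2-b^3
    let q := -a^3+3*a^2*b-2*a*b^2+b^3
    let r := a^3-a*b^2+b^3
    ((p^2-r^2)*(p^4+2*p^3*q-2*p^2*r^2+2*p*q^3+q^4-2*q^2*r^2-2*r^4) ≠ 0 →
      (p^2+q^2)*(p^4+2*p^3*q-2*p^2*r^2-2*p*q^3-4*p*q*r^2+q^4+2*q^2*r^2+2*r^4) /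
        ((p^2-r^2)*(p^4+2*p^3*q-2*p^2*r^2+2*p*q^3+q^4-2*q^2*r^2-2*r^4)) =
      -(5*a^4-8*a^3*b+8*a^2*b^2-4*a*b^3+b^4)/(a*(a-b)*(5*a^2-5*a*b+2*b^2))) ∧
    ((p^2-r^2)*(p^4-2*p^3*r-2*p^2*q^2-2*p*r^3-2*q^4-2*q^2*r^2+r^4) ≠ 0 →
      (p^2+q^2)*(p^4-2*p^3*r-2*p^2*q^2+4*p*q^2*r+2*p*r^3+2*q^4+2*q^2*r^2+r^4) /
        ((p^2-r^2)*(p^4-2*p^3*r-2*p^2*q^2-2*p*r^3-2*q^4-2*q^2*r^2+r^4)) =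
      -(5*a^4-8*a^3*b+8*a^2*b^2-4*a*b^3+b^4)/(a*(a-b)*(5*a^2-5*a*b+2*b^2))) := by
  intro p q r
  have hd : a*(a-b)*(5*a^2-5*a*b+2*b^2) ≠ 0 :=
    mul_ne_zero (mul_ne_zero ha (sub_ne_zero.mpr hab)) h5
  constructor <;> intro h <;> rw [div_eq_div_iff h hd] <;> simp only [p, q, r] <;> ring
end

section
/- For all nonzero integers p, q, r, t with distinct values producing nonzero entries, with x1, x2, x3, y1, y2, y3 given by the parametric solution (with k = 1): x1 = ((p^4-r^4)t^2 - 2(p^4-q^4)t + p^4-q^4)p^2, x2 = ((p^4-r^4)t^2 - 2(p^4-r^4)t + p^4-q^4)q^2, x3 = ((p^4-r^4)t^2 - (p^4-q^4))r^2, y1 = ((p^4-r^4)t^2 - 2(p^4-r^4)t + p^4-q^4)p^2, y2 = ((p^4-r^4)t^2 - (p^4-q^4))q^2, y3 = ((p^4-r^4)t^2 - 2(p^4-q^4)t + p^4-q^4)r^2, the ratios y1/x2, y2/x3, y3/x1 are perfect squares of rationals (namely (p/q)^2, (q/r)^2, (r/p)^2 respectively). -/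
/-! Each quotient compares two numbers with the same quadratic factor in `t`, which cancels. -/

theorem mul_sq_div_mul_sq {K : Type*} [Field K] {a : K} (ha : a ≠ 0) (u v : K) :
    a * u ^ 2 / (a * v ^ 2) = (u / v) ^ 2 := by
  rw [mul_div_mul_left _ _ ha, div_pow]

theorem stmt_16_general (p q r t : ℚ)
    (x1 x2 x3 y1 y2 y3 : ℚ)
    (hx1 : x1 = ((p^4-r^4)*t^2 - 2*(p^4-q^4)*t + p^4-q^4)*p^2)
    (hx2 : x2 = ((p^4-r^4)*t^2 - 2*(p^4-r^4)*t + p^4-q^4)*q^2)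
    (hx3 : x3 = ((p^4-r^4)*t^2 - (p^4-q^4))*r^2)
    (hy1 : y1 = ((p^4-r^4)*t^2 - 2*(p^4-r^4)*t + p^4-q^4)*p^2)
    (hy2 : y2 = ((p^4-r^4)*t^2 - (p^4-q^4))*q^2)
    (hy3 : y3 = ((p^4-r^4)*t^2 - 2*(p^4-q^4)*t + p^4-q^4)*r^2)
    (hx1' : x1 ≠ 0) (hx2' : x2 ≠ 0) (hx3' : x3 ≠ 0) :
    y1/x2 = (p/q)^2 ∧ y2/x3 = (q/r)^2 ∧ y3/x1 = (r/p)^2 := by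
  subst hx1 hx2 hx3 hy1 hy2 hy3
  exact ⟨mul_sq_div_mul_sq (left_ne_zero_of_mul hx2') p q,
    mul_sq_div_mul_sq (left_ne_zero_of_mul hx3') q r,
    mul_sq_div_mul_sq (left_ne_zero_of_mul hx1') r p⟩

theorem stmt_16 (p q r t : ℚ) (hp : p ≠ 0) (hq : q ≠ 0) (hr : r ≠ 0)
    (x1 x2 x3 y1 y2 y3 : ℚ)
    (hx1 : x1 = ((p^4-r^4)*t^2 - 2*(p^4-q^4)*t + p^4-q^4)*p^2)
    (hx2 : x2 = ((p^4-r^4)*t^2 - 2*(p^4-r^4)*t + p^4-q^4)*q^2)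
    (hx3 : x3 = ((p^4-r^4)*t^2 - (p^4-q^4))*r^2)
    (hy1 : y1 = ((p^4-r^4)*t^2 - 2*(p^4-r^4)*t + p^4-q^4)*p^2)
    (hy2 : y2 = ((p^4-r^4)*t^2 - (p^4-q^4))*q^2)
    (hy3 : y3 = ((p^4-r^4)*t^2 - 2*(p^4-q^4)*t + p^4-q^4)*r^2)
    (hx1' : x1 ≠ 0) (hx2' : x2 ≠ 0) (hx3' : x3 ≠ 0) :
    y1/x2 = (p/q)^2 ∧ y2/x3 = (q/r)^2 ∧ y3/x1 = (r/p)^2 :=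
  stmt_16_general p q r t x1 x2 x3 y1 y2 y3 hx1 hx2 hx3 hy1 hy2 hy3 hx1' hx2' hx3'
end
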